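/- arXiv:1011.0660 — 3 statements merged into one kernel-verified Lean document; each statement's English description precedes it below -/
import Mathlib

section
/- The gauge matrix S(λ; θ, ω) diagonalizes the boundary matrix K₋: S⁻¹(λ; δ−ζ, τ) K₋(λ; δ, ζ, τ) S(−λ; δ−ζ, τ) equals the diagonal matrix diag( sinh(δ−λ)/sinh(δ+λ), sinh(ζ−λ)/sinh(ζ+λ) ). -/
/-!
The columns of `S(μ; δ - ζ, τ)` behave like eigenvectors of `K₋`: `K₋(λ)` maps column `j` of
`S(-λ)` to `dⱼ` times column `j` of `S(λ)`, where `dⱼ` is the `j`-th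
diagonal entry of the target. For column `0` this is a direct computation with
exponentials. Column `1` of `S(θ)` is column `0` of `S(-θ)`, and `K₋` is symmetric in `δ, ζ`,
so swapping `δ` and `ζ` turns the first relation into the second. Finally
`det S(λ; θ, ω) = -2 e^{-ω} sinh θ`, so `S(λ; δ - ζ, τ)` is invertible.
-/

open Matrix Complex

noncomputable def Kmat (δ ζ τ lam : ℂ) : Matrix (Fin 2) (Fin 2) ℂ :=
  !![(Complex.cosh (δ + ζ) * Complex.exp (-lam) - Complex.cosh (δ - ζ) * Complex.exp lam) /
        (2 * Complex.sinh (δ + lam) * Complex.sinh (lam + ζ)),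
     Complex.exp (-τ) * Complex.sinh (2 * lam) /
        (2 * Complex.sinh (δ + lam) * Complex.sinh (lam + ζ));
     -(Complex.exp τ) * Complex.sinh (2 * lam) /
        (2 * Complex.sinh (δ + lam) * Complex.sinh (lam + ζ)),
     (Complex.cosh (δ + ζ) * Complex.exp lam - Complex.cosh (δ - ζ) * Complex.exp (-lam)) /
        (2 * Complex.sinh (δ + lam) * Complex.sinh (lam + ζ))]

noncomputable def Smat (θ ω lam : ℂ) : Matrix (Fin 2) (Fin 2) ℂ :=
  Complex.exp (lam / 2) •
    !![Complex.exp (-(lam + θ + ω)), Complex.exp (-(lam - θ + ω)); 1, 1]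

theorem det_Smat (θ ω lam : ℂ) : (Smat θ ω lam).det = -2 * exp (-ω) * sinh θ := by
  have h : exp (lam / 2) ^ 2 = exp lam := by rw [← exp_nat_mul]; ring_nf
  rw [Smat, det_smul, det_fin_two_of, Fintype.card_fin, h, Complex.sinh]
  simp only [exp_neg, exp_add, exp_sub]
  field_simp
  ring

theorem Smat_col_zero (θ ω lam : ℂ) :
    (fun i => Smat θ ω lam i 0) = exp (lam / 2) • ![exp (-(lam + θ + ω)), 1] := by
  ext i; fin_cases i <;> rfl

theorem Smat_col_one (θ ω lam : ℂ) :
    (fun i => Smat θ ω lam i 1) = fun i => Smat (-θ) ω lam i 0 := by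
  ext i; fin_cases i <;> simp [Smat, sub_eq_add_neg]

theorem Kmat_comm (δ ζ τ lam : ℂ) : Kmat ζ δ τ lam = Kmat δ ζ τ lam := by
  rw [Kmat, Kmat, add_comm ζ δ, ← Complex.cosh_neg (ζ - δ), neg_sub]
  ring_nf

theorem Kmat_mulVec_exp_vec {δ ζ lam : ℂ} (τ : ℂ) (h1 : sinh (δ + lam) ≠ 0)
    (h2 : sinh (lam + ζ) ≠ 0) :
    Kmat δ ζ τ lam *ᵥ ![exp (-(-lam + (δ - ζ) + τ)), 1] =
      (sinh (δ - lam) / sinh (δ + lam) * exp lam) • ![exp (-(lam + (δ - ζ) + τ)), 1] := by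
  ext i
  -- `sinh_two_mul` is needed: `field_simp` would rewrite `2 * lam` as `lam * 2`, out of reach of
  -- `exp_add`.
  fin_cases i <;>
  · simp only [Kmat, mulVec, dotProduct, Fin.sum_univ_two, sinh_two_mul, Fin.zero_eta, Fin.mk_one,
      of_apply, cons_val', cons_val_fin_one, cons_val_zero, cons_val_one, mul_one, Pi.smul_apply,
      smul_eq_mul]
    field_simp
    simp only [Complex.sinh, Complex.cosh, exp_neg, exp_add, exp_sub]
    field_simp
    ring

theorem Kmat_mulVec_Smat_col_zero {δ ζ lam : ℂ} (τ : ℂ) (h1 : sinh (δ + lam) ≠ 0)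
    (h2 : sinh (lam + ζ) ≠ 0) :
    Kmat δ ζ τ lam *ᵥ (fun i => Smat (δ - ζ) τ (-lam) i 0) =
      (sinh (δ - lam) / sinh (δ + lam)) • fun i => Smat (δ - ζ) τ lam i 0 := by
  have h : exp (-lam / 2) * exp lam = exp (lam / 2) := by rw [← exp_add]; ring_nf
  rw [Smat_col_zero, Smat_col_zero, mulVec_smul, Kmat_mulVec_exp_vec τ h1 h2, smul_smul, smul_smul,
    mul_left_comm, h, mul_comm]

theorem Kmat_mulVec_Smat_col_one {δ ζ lam : ℂ} (τ : ℂ) (h1 : sinh (δ + lam) ≠ 0)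
    (h2 : sinh (lam + ζ) ≠ 0) :
    Kmat δ ζ τ lam *ᵥ (fun i => Smat (δ - ζ) τ (-lam) i 1) =
      (sinh (ζ - lam) / sinh (ζ + lam)) • fun i => Smat (δ - ζ) τ lam i 1 := by
  rw [Smat_col_one, Smat_col_one, neg_sub, ← Kmat_comm]
  exact Kmat_mulVec_Smat_col_zero τ (by rwa [add_comm]) (by rwa [add_comm])

theorem Kmat_mul_Smat_neg {δ ζ lam : ℂ} (τ : ℂ) (h1 : sinh (δ + lam) ≠ 0)
    (h2 : sinh (lam + ζ) ≠ 0) :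
    Kmat δ ζ τ lam * Smat (δ - ζ) τ (-lam) =
      Smat (δ - ζ) τ lam *
        diagonal ![sinh (δ - lam) / sinh (δ + lam), sinh (ζ - lam) / sinh (ζ + lam)] := by
  ext i j
  rw [mul_diagonal, mul_comm]
  fin_cases j
  · exact congrFun (Kmat_mulVec_Smat_col_zero τ h1 h2) i
  · exact congrFun (Kmat_mulVec_Smat_col_one τ h1 h2) i

theorem gauge_diagonalizes_Kminus (δ ζ τ lm : ℂ)
    (h1 : Complex.sinh (δ + lm) ≠ 0) (h2 : Complex.sinh (lm + ζ) ≠ 0)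
    (h3 : Complex.sinh (δ - ζ) ≠ 0) :
    (Smat (δ - ζ) τ lm)⁻¹ * Kmat δ ζ τ lm * Smat (δ - ζ) τ (-lm) =
      !![Complex.sinh (δ - lm) / Complex.sinh (δ + lm), 0;
         0, Complex.sinh (ζ - lm) / Complex.sinh (ζ + lm)] := by
  have hS : IsUnit (Smat (δ - ζ) τ lm).det := by
    rw [det_Smat, isUnit_iff_ne_zero]
    exact mul_ne_zero (mul_ne_zero (by norm_num) (exp_ne_zero _)) h3
  rw [Matrix.mul_assoc, Kmat_mul_Smat_neg τ h1 h2, nonsing_inv_mul_cancel_left _ _ hS,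
    diagonal_vec2]
end

section
/- The dual boundary matrix 𝓚₊(λ; δ̄, ζ̄) := 𝓚₋(−λ−η; δ̄, ζ̄) satisfies the dual dynamical reflection equation: 𝓡₁₂(λ₂−λ₁; θ̄) (𝓚₊^{t₁})₁(λ₁) 𝓡₂₁(−λ₁−λ₂−2η; θ̄) (𝓚₊^{t₂})₂(λ₂) = (𝓚₊^{t₂})₂(λ₂) 𝓡₁₂(−λ₁−λ₂−2η; θ̄) (𝓚₊^{t₁})₁(λ₁) 𝓡₂₁(λ₂−λ₁; θ̄) with θ̄ = δ̄−ζ̄. -/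
open Matrix Complex


noncomputable def DRmat (η lam θ : ℂ) : Matrix (Fin 2 × Fin 2) (Fin 2 × Fin 2) ℂ :=
  Matrix.of fun p q =>
    if p.1 = q.1 ∧ p.2 = q.2 then
      (if p.1 = p.2 then Complex.sinh (lam + η)
       else if p.1 = 0 then Complex.sinh lam * Complex.sinh (θ - η) / Complex.sinh θ
       else Complex.sinh lam * Complex.sinh (θ + η) / Complex.sinh θ)
    else if p.1 = q.2 ∧ p.2 = q.1 ∧ p.1 ≠ p.2 then
      (if p.1 = 0 then Complex.sinh η * Complex.sinh (θ - lam) / Complex.sinh θ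
       else Complex.sinh η * Complex.sinh (θ + lam) / Complex.sinh θ)
    else 0

noncomputable def Pmat : Matrix (Fin 2 × Fin 2) (Fin 2 × Fin 2) ℂ :=
  Matrix.of fun p q => if p.1 = q.2 ∧ p.2 = q.1 then 1 else 0

noncomputable def tens (A B : Matrix (Fin 2) (Fin 2) ℂ) :
    Matrix (Fin 2 × Fin 2) (Fin 2 × Fin 2) ℂ :=
  Matrix.of fun p q => A p.1 q.1 * B p.2 q.2

noncomputable def KDmat (δ ζ lam : ℂ) : Matrix (Fin 2) (Fin 2) ℂ :=
  !![Complex.sinh (δ - lam) / Complex.sinh (δ + lam), 0;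
     0, Complex.sinh (ζ - lam) / Complex.sinh (ζ + lam)]


set_option maxHeartbeats 4000000

lemma csinh_eq (z : ℂ) : Complex.sinh z = (Complex.exp z - Complex.exp (-z)) / 2 := by
  rw [eq_div_iff (by norm_num : (2:ℂ) ≠ 0), mul_comm, Complex.two_sinh]

noncomputable def Rp (η lam θ : ℂ) : Matrix (Fin 2 × Fin 2) (Fin 2 × Fin 2) ℂ :=
  Matrix.of fun p q =>
    if p.1 = q.1 ∧ p.2 = q.2 then
      (if p.1 = p.2 then Complex.sinh (lam + η) * Complex.sinh θ
       else if p.1 = 0 then Complex.sinh lam * Complex.sinh (θ - η)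
       else Complex.sinh lam * Complex.sinh (θ + η))
    else if p.1 = q.2 ∧ p.2 = q.1 ∧ p.1 ≠ p.2 then
      (if p.1 = 0 then Complex.sinh η * Complex.sinh (θ - lam)
       else Complex.sinh η * Complex.sinh (θ + lam))
    else 0

noncomputable def Kp (δ ζ lam : ℂ) : Matrix (Fin 2) (Fin 2) ℂ :=
  !![Complex.sinh (δ - lam) * Complex.sinh (ζ + lam), 0;
     0, Complex.sinh (ζ - lam) * Complex.sinh (δ + lam)]

lemma DR_decomp (η lam θ : ℂ) (h : Complex.sinh θ ≠ 0) :
    DRmat η lam θ = (Complex.sinh θ)⁻¹ • Rp η lam θ := by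
  ext p q
  simp only [DRmat, Rp, Matrix.smul_apply, Matrix.of_apply, smul_eq_mul]
  split_ifs <;> field_simp <;> ring

lemma KD_decomp (δ ζ lam : ℂ) (hd : Complex.sinh (δ + lam) ≠ 0)
    (hz : Complex.sinh (ζ + lam) ≠ 0) :
    KDmat δ ζ lam = (Complex.sinh (δ + lam) * Complex.sinh (ζ + lam))⁻¹ • Kp δ ζ lam := by
  ext p q
  fin_cases p <;> fin_cases q <;>
    simp [KDmat, Kp] <;> field_simp <;> ring

lemma tens_smul_left (a : ℂ) (A B : Matrix (Fin 2) (Fin 2) ℂ) :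
    tens (a • A) B = a • tens A B := by
  ext p q; simp [tens, mul_assoc]

lemma tens_smul_right (a : ℂ) (A B : Matrix (Fin 2) (Fin 2) ℂ) :
    tens A (a • B) = a • tens A B := by
  ext p q; simp [tens]; ring

lemma core_identity (η δb ζb lm₁ lm₂ : ℂ) :
    Rp η (lm₂ - lm₁) (δb - ζb) * tens (Kp δb ζb (-lm₁ - η)) 1 *
        (Pmat * Rp η (-lm₁ - lm₂ - 2 * η) (δb - ζb) * Pmat) *
        tens 1 (Kp δb ζb (-lm₂ - η)) =
      tens 1 (Kp δb ζb (-lm₂ - η)) * Rp η (-lm₁ - lm₂ - 2 * η) (δb - ζb) *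
        tens (Kp δb ζb (-lm₁ - η)) 1 * (Pmat * Rp η (lm₂ - lm₁) (δb - ζb) * Pmat) := by
  have hA := Complex.exp_ne_zero η
  have hB := Complex.exp_ne_zero lm₁
  have hC := Complex.exp_ne_zero lm₂
  have hD := Complex.exp_ne_zero δb
  have hE := Complex.exp_ne_zero ζb
  ext p q
  fin_cases p <;> fin_cases q <;>
    simp [Rp, Pmat, tens, Kp, Matrix.mul_apply, Fintype.sum_prod_type,
      Fin.sum_univ_two, Matrix.one_apply] <;>
    simp only [csinh_eq, Complex.exp_add, Complex.exp_sub, Complex.exp_neg, two_mul] <;>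
    generalize Complex.exp η = A at hA ⊢ <;>
    generalize Complex.exp lm₁ = B at hB ⊢ <;>
    generalize Complex.exp lm₂ = C at hC ⊢ <;>
    generalize Complex.exp δb = D at hD ⊢ <;>
    generalize Complex.exp ζb = E at hE ⊢ <;>
    field_simp <;>
    ring

theorem dual_dynamical_reflection_equation (η δb ζb lm₁ lm₂ : ℂ)
    (h1 : Complex.sinh (δb - ζb) ≠ 0)
    (h2 : Complex.sinh (δb - lm₁ - η) ≠ 0) (h3 : Complex.sinh (ζb - lm₁ - η) ≠ 0)
    (h4 : Complex.sinh (δb - lm₂ - η) ≠ 0) (h5 : Complex.sinh (ζb - lm₂ - η) ≠ 0) :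
    DRmat η (lm₂ - lm₁) (δb - ζb) *
        tens (KDmat δb ζb (-lm₁ - η)) (1 : Matrix (Fin 2) (Fin 2) ℂ) *
        (Pmat * DRmat η (-lm₁ - lm₂ - 2 * η) (δb - ζb) * Pmat) *
        tens (1 : Matrix (Fin 2) (Fin 2) ℂ) (KDmat δb ζb (-lm₂ - η)) =
      tens (1 : Matrix (Fin 2) (Fin 2) ℂ) (KDmat δb ζb (-lm₂ - η)) *
        DRmat η (-lm₁ - lm₂ - 2 * η) (δb - ζb) *
        tens (KDmat δb ζb (-lm₁ - η)) (1 : Matrix (Fin 2) (Fin 2) ℂ) *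
        (Pmat * DRmat η (lm₂ - lm₁) (δb - ζb) * Pmat) := by
  have e2 : δb + (-lm₁ - η) = δb - lm₁ - η := by ring
  have e3 : ζb + (-lm₁ - η) = ζb - lm₁ - η := by ring
  have e4 : δb + (-lm₂ - η) = δb - lm₂ - η := by ring
  have e5 : ζb + (-lm₂ - η) = ζb - lm₂ - η := by ring
  have H2 : Complex.sinh (δb + (-lm₁ - η)) ≠ 0 := by rw [e2]; exact h2
  have H3 : Complex.sinh (ζb + (-lm₁ - η)) ≠ 0 := by rw [e3]; exact h3
  have H4 : Complex.sinh (δb + (-lm₂ - η)) ≠ 0 := by rw [e4]; exact h4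
  have H5 : Complex.sinh (ζb + (-lm₂ - η)) ≠ 0 := by rw [e5]; exact h5
  rw [DR_decomp η (lm₂ - lm₁) (δb - ζb) h1,
      DR_decomp η (-lm₁ - lm₂ - 2 * η) (δb - ζb) h1,
      KD_decomp δb ζb (-lm₁ - η) H2 H3,
      KD_decomp δb ζb (-lm₂ - η) H4 H5,
      tens_smul_left, tens_smul_right]
  simp only [Matrix.smul_mul, Matrix.mul_smul, smul_smul]
  rw [core_identity η δb ζb lm₁ lm₂]
  congr 1
  ring
end

section
/- The operators 𝓒₋ and 𝓑₋ of the dynamical double-row monodromy matrix are conjugate under the global spin flip combined with parameter exchange: 𝓒₋(λ; δ−ζ) = Γₓ 𝓑₋(λ; ζ−δ) Γₓ, where Γₓ = σ₁ˣ⋯σ_Nˣ, and 𝓑₋(λ; ζ−δ) is defined with δ and ζ interchanged in 𝓚₋. -/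
open Matrix Complex

noncomputable def sz (a : Fin 2) : ℂ := if a = 0 then 1 else -1

noncomputable def Tfac (N : ℕ) (η θ lam : ℂ) (ξ : Fin N → ℂ) (k : Fin N) :
    Matrix (Fin 2 × (Fin N → Fin 2)) (Fin 2 × (Fin N → Fin 2)) ℂ :=
  Matrix.of fun p q =>
    if ∀ i, i ≠ k → p.2 i = q.2 i then
      DRmat η (lam - ξ k) (θ - η * ∑ i, if k < i then sz (p.2 i) else 0)
        (p.1, p.2 k) (q.1, q.2 k)
    else 0

noncomputable def TfacHat (N : ℕ) (η θ lam : ℂ) (ξ : Fin N → ℂ) (k : Fin N) :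
    Matrix (Fin 2 × (Fin N → Fin 2)) (Fin 2 × (Fin N → Fin 2)) ℂ :=
  Matrix.of fun p q =>
    if ∀ i, i ≠ k → p.2 i = q.2 i then
      DRmat η (lam + ξ k) (θ - η * ∑ i, if k < i then sz (p.2 i) else 0)
        (p.2 k, p.1) (q.2 k, q.1)
    else 0

noncomputable def Tmono (N : ℕ) (η θ lam : ℂ) (ξ : Fin N → ℂ) :
    Matrix (Fin 2 × (Fin N → Fin 2)) (Fin 2 × (Fin N → Fin 2)) ℂ :=
  ((List.finRange N).map (Tfac N η θ lam ξ)).prod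

noncomputable def TmonoHat (N : ℕ) (η θ lam : ℂ) (ξ : Fin N → ℂ) :
    Matrix (Fin 2 × (Fin N → Fin 2)) (Fin 2 × (Fin N → Fin 2)) ℂ :=
  ((List.finRange N).reverse.map (TfacHat N η θ lam ξ)).prod

noncomputable def Kzero (N : ℕ) (δ ζ lam : ℂ) :
    Matrix (Fin 2 × (Fin N → Fin 2)) (Fin 2 × (Fin N → Fin 2)) ℂ :=
  Matrix.of fun p q => if p.2 = q.2 then KDmat δ ζ lam p.1 q.1 else 0

noncomputable def Uminus (N : ℕ) (η δ ζ lam : ℂ) (ξ : Fin N → ℂ) :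
    Matrix (Fin 2 × (Fin N → Fin 2)) (Fin 2 × (Fin N → Fin 2)) ℂ :=
  Tmono N η (δ - ζ) lam ξ * Kzero N δ ζ lam * TmonoHat N η (δ - ζ) lam ξ

noncomputable def Bop (N : ℕ) (η δ ζ lam : ℂ) (ξ : Fin N → ℂ) :
    Matrix (Fin N → Fin 2) (Fin N → Fin 2) ℂ :=
  Matrix.of fun s s' => Uminus N η δ ζ lam ξ (0, s) (1, s')

noncomputable def Cop (N : ℕ) (η δ ζ lam : ℂ) (ξ : Fin N → ℂ) :
    Matrix (Fin N → Fin 2) (Fin N → Fin 2) ℂ :=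
  Matrix.of fun s s' => Uminus N η δ ζ lam ξ (1, s) (0, s')

noncomputable def GammaX (N : ℕ) : Matrix (Fin N → Fin 2) (Fin N → Fin 2) ℂ :=
  Matrix.of fun s s' => if ∀ i, s' i = (if s i = 0 then 1 else 0) then 1 else 0


noncomputable def flip2 : Fin 2 → Fin 2 := fun a => if a = 0 then 1 else 0

lemma flip2_invol : Function.Involutive flip2 := by
  intro a; fin_cases a <;> rfl

noncomputable def flipP (N : ℕ) : (Fin 2 × (Fin N → Fin 2)) → (Fin 2 × (Fin N → Fin 2)) :=
  fun p => (flip2 p.1, flip2 ∘ p.2)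

lemma flipS_invol {N : ℕ} (s : Fin N → Fin 2) : flip2 ∘ (flip2 ∘ s) = s :=
  funext fun i => flip2_invol (s i)

lemma flipP_invol (N : ℕ) : Function.Involutive (flipP N) := by
  intro p
  simp [flipP, flip2_invol p.1, flipS_invol]

noncomputable def flipEq (N : ℕ) : Equiv.Perm (Fin 2 × (Fin N → Fin 2)) :=
  (flipP_invol N).toPerm

lemma flipEq_symm_apply {N : ℕ} (p : Fin 2 × (Fin N → Fin 2)) :
    (flipEq N).symm p = flipP N p := rfl

lemma sz_flip (a : Fin 2) : sz (flip2 a) = -(sz a) := by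
  fin_cases a <;> simp [sz, flip2]

lemma DRmat_flip (η L θ : ℂ) (a b c d : Fin 2) :
    DRmat η L θ (flip2 a, flip2 b) (flip2 c, flip2 d) = DRmat η L (-θ) (a, b) (c, d) := by
  have k1 : ∀ u : ℂ, Complex.sinh (-θ - u) / -Complex.sinh θ
      = Complex.sinh (θ + u) / Complex.sinh θ := by
    intro u
    rw [show -θ - u = -(θ + u) by ring, Complex.sinh_neg, neg_div_neg_eq]
  have k2 : ∀ u : ℂ, Complex.sinh (-θ + u) / -Complex.sinh θ
      = Complex.sinh (θ - u) / Complex.sinh θ := by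
    intro u
    rw [show -θ + u = -(θ - u) by ring, Complex.sinh_neg, neg_div_neg_eq]
  fin_cases a <;> fin_cases b <;> fin_cases c <;> fin_cases d <;>
    simp [DRmat, flip2, mul_div_assoc, k1, k2]

lemma sum_sz_flip {N : ℕ} (s : Fin N → Fin 2) (k : Fin N) :
    (∑ i, if k < i then sz ((flip2 ∘ s) i) else 0)
      = -∑ i, if k < i then sz (s i) else 0 := by
  rw [← Finset.sum_neg_distrib]
  refine Finset.sum_congr rfl fun i _ => ?_
  by_cases hk : k < i <;> simp [hk, sz_flip]

lemma cond_flip {N : ℕ} (p q : Fin 2 × (Fin N → Fin 2)) (k : Fin N) :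
    (∀ i, i ≠ k → (flip2 ∘ p.2) i = (flip2 ∘ q.2) i) ↔ (∀ i, i ≠ k → p.2 i = q.2 i) := by
  constructor
  · intro h i hi
    exact flip2_invol.injective (h i hi)
  · intro h i hi
    simp [Function.comp, h i hi]

lemma Tfac_flip {N : ℕ} (η θ lam : ℂ) (ξ : Fin N → ℂ) (k : Fin N)
    (p q : Fin 2 × (Fin N → Fin 2)) :
    Tfac N η θ lam ξ k (flipP N p) (flipP N q) = Tfac N η (-θ) lam ξ k p q := by
  unfold Tfac flipP
  simp only [Matrix.of_apply]
  rw [if_congr (cond_flip p q k) rfl rfl]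
  by_cases h : ∀ i, i ≠ k → p.2 i = q.2 i
  · rw [if_pos h, if_pos h]
    rw [sum_sz_flip p.2 k,
      show -θ - η * (∑ i, if k < i then sz (p.2 i) else 0)
        = -(θ - η * -(∑ i, if k < i then sz (p.2 i) else 0)) by ring]
    exact DRmat_flip _ _ _ _ _ _ _
  · rw [if_neg h, if_neg h]

lemma TfacHat_flip {N : ℕ} (η θ lam : ℂ) (ξ : Fin N → ℂ) (k : Fin N)
    (p q : Fin 2 × (Fin N → Fin 2)) :
    TfacHat N η θ lam ξ k (flipP N p) (flipP N q) = TfacHat N η (-θ) lam ξ k p q := by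
  unfold TfacHat flipP
  simp only [Matrix.of_apply]
  rw [if_congr (cond_flip p q k) rfl rfl]
  by_cases h : ∀ i, i ≠ k → p.2 i = q.2 i
  · rw [if_pos h, if_pos h]
    rw [sum_sz_flip p.2 k,
      show -θ - η * (∑ i, if k < i then sz (p.2 i) else 0)
        = -(θ - η * -(∑ i, if k < i then sz (p.2 i) else 0)) by ring]
    exact DRmat_flip _ _ _ _ _ _ _
  · rw [if_neg h, if_neg h]

lemma Kzero_flip {N : ℕ} (δ ζ lam : ℂ) (p q : Fin 2 × (Fin N → Fin 2)) :
    Kzero N δ ζ lam (flipP N p) (flipP N q) = Kzero N ζ δ lam p q := by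
  unfold Kzero flipP
  simp only [Matrix.of_apply]
  have hc : (flip2 ∘ p.2 = flip2 ∘ q.2) ↔ p.2 = q.2 := by
    constructor
    · intro h; rw [← flipS_invol p.2, h, flipS_invol]
    · intro h; rw [h]
  rw [if_congr hc rfl rfl]
  by_cases h : p.2 = q.2
  · simp only [h, if_true]
    have : ∀ a b : Fin 2, KDmat δ ζ lam (flip2 a) (flip2 b) = KDmat ζ δ lam a b := by
      intro a b; fin_cases a <;> fin_cases b <;> simp [KDmat, flip2]
    exact this p.1 q.1
  · simp [h]

noncomputable def Rmap (N : ℕ) :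
    Matrix (Fin 2 × (Fin N → Fin 2)) (Fin 2 × (Fin N → Fin 2)) ℂ
      ≃ₐ[ℂ] Matrix (Fin 2 × (Fin N → Fin 2)) (Fin 2 × (Fin N → Fin 2)) ℂ :=
  Matrix.reindexAlgEquiv ℂ ℂ (flipEq N)

lemma Rmap_apply {N : ℕ} (M : Matrix (Fin 2 × (Fin N → Fin 2)) (Fin 2 × (Fin N → Fin 2)) ℂ)
    (p q : Fin 2 × (Fin N → Fin 2)) :
    Rmap N M p q = M (flipP N p) (flipP N q) := rfl

lemma Rmap_Tfac {N : ℕ} (η θ lam : ℂ) (ξ : Fin N → ℂ) (k : Fin N) :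
    Rmap N (Tfac N η θ lam ξ k) = Tfac N η (-θ) lam ξ k := by
  ext p q
  rw [Rmap_apply, Tfac_flip]

lemma Rmap_TfacHat {N : ℕ} (η θ lam : ℂ) (ξ : Fin N → ℂ) (k : Fin N) :
    Rmap N (TfacHat N η θ lam ξ k) = TfacHat N η (-θ) lam ξ k := by
  ext p q
  rw [Rmap_apply, TfacHat_flip]

lemma Rmap_Kzero {N : ℕ} (δ ζ lam : ℂ) :
    Rmap N (Kzero N δ ζ lam) = Kzero N ζ δ lam := by
  ext p q
  rw [Rmap_apply, Kzero_flip]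

lemma Rmap_Tmono {N : ℕ} (η θ lam : ℂ) (ξ : Fin N → ℂ) :
    Rmap N (Tmono N η θ lam ξ) = Tmono N η (-θ) lam ξ := by
  unfold Tmono
  rw [map_list_prod, List.map_map]
  congr 1
  exact List.map_congr_left fun k _ => Rmap_Tfac η θ lam ξ k

lemma Rmap_TmonoHat {N : ℕ} (η θ lam : ℂ) (ξ : Fin N → ℂ) :
    Rmap N (TmonoHat N η θ lam ξ) = TmonoHat N η (-θ) lam ξ := by
  unfold TmonoHat
  rw [map_list_prod, List.map_map]
  congr 1
  exact List.map_congr_left fun k _ => Rmap_TfacHat η θ lam ξ k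

lemma Rmap_Uminus {N : ℕ} (η δ ζ lam : ℂ) (ξ : Fin N → ℂ) :
    Rmap N (Uminus N η δ ζ lam ξ) = Uminus N η ζ δ lam ξ := by
  unfold Uminus
  rw [_root_.map_mul, _root_.map_mul, Rmap_Tmono, Rmap_TmonoHat, Rmap_Kzero,
    show -(δ - ζ) = ζ - δ by ring]

lemma Uminus_flip {N : ℕ} (η δ ζ lam : ℂ) (ξ : Fin N → ℂ) (p q : Fin 2 × (Fin N → Fin 2)) :
    Uminus N η ζ δ lam ξ p q = Uminus N η δ ζ lam ξ (flipP N p) (flipP N q) := by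
  rw [← Rmap_Uminus η δ ζ lam ξ, Rmap_apply]

lemma GammaX_apply {N : ℕ} (s s' : Fin N → Fin 2) :
    GammaX N s s' = if s' = flip2 ∘ s then 1 else 0 := by
  unfold GammaX
  simp only [Matrix.of_apply]
  refine if_congr ?_ rfl rfl
  rw [funext_iff]
  exact Iff.rfl

lemma GammaX_mul {N : ℕ} (M : Matrix (Fin N → Fin 2) (Fin N → Fin 2) ℂ) (s t : Fin N → Fin 2) :
    (GammaX N * M) s t = M (flip2 ∘ s) t := by
  rw [Matrix.mul_apply]
  rw [Finset.sum_eq_single (flip2 ∘ s)]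
  · rw [GammaX_apply, if_pos rfl, one_mul]
  · intro b _ hb
    rw [GammaX_apply, if_neg hb, zero_mul]
  · intro h
    exact absurd (Finset.mem_univ _) h

lemma mul_GammaX {N : ℕ} (M : Matrix (Fin N → Fin 2) (Fin N → Fin 2) ℂ) (s t : Fin N → Fin 2) :
    (M * GammaX N) s t = M s (flip2 ∘ t) := by
  rw [Matrix.mul_apply]
  rw [Finset.sum_eq_single (flip2 ∘ t)]
  · rw [GammaX_apply, flipS_invol, if_pos rfl, mul_one]
  · intro b _ hb
    rw [GammaX_apply, if_neg, mul_zero]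
    intro h
    exact hb (by rw [h, flipS_invol])
  · intro h
    exact absurd (Finset.mem_univ _) h

theorem C_equals_flipped_B (N : ℕ) (η δ ζ lam : ℂ) (ξ : Fin N → ℂ)
    (hθ : ∀ k : ℤ, Complex.sinh (δ - ζ + (k : ℂ) * η) ≠ 0)
    (hδ : Complex.sinh (δ + lam) ≠ 0) (hζ : Complex.sinh (ζ + lam) ≠ 0) :
    Cop N η δ ζ lam ξ = GammaX N * Bop N η ζ δ lam ξ * GammaX N := by
  ext s s'
  rw [mul_GammaX, GammaX_mul]
  show Uminus N η δ ζ lam ξ (1, s) (0, s')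
      = Uminus N η ζ δ lam ξ (0, flip2 ∘ s) (1, flip2 ∘ s')
  rw [Uminus_flip]
  have h1 : flipP N ((1 : Fin 2), s) = (0, flip2 ∘ s) := rfl
  have h2 : flipP N ((0 : Fin 2), s') = (1, flip2 ∘ s') := rfl
  rw [h1, h2]
end
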